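/- arXiv:2401.14098 — 3 statements merged into one kernel-verified Lean document; each statement's English description precedes it below -/
import Mathlib

section
/- (Lemma 3, message-bit corruption.) Let k ≥ 2 and let x, y < 2^(k+1) with z = (x + y) mod 2^(k+1). Assume the redundant message-bit condition Nat.testBit z (k−1) = Nat.testBit z k (both positions carry the decoded message bit m̂). Suppose Nat.testBit x (k−2) = false and let z* = ((x + 2^(k−2)) + y) mod 2^(k+1). Then the message bit is corrupted, i.e. Nat.testBit z* k ≠ Nat.testBit z k, if and only if Nat.testBit z (k−2) = true and the message bit m̂ = Nat.testBit z k = true. -/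
/-!
Modulo `2^(k+1)` the fault adds `2^(k-2)` to `z` itself. Adding `2^p` flips bit `p + j` exactly
when the carry runs through bits `p, …, p + j - 1`; for `j = 2` these are bits `k-2` and `k-1`
of `z`, and bit `k-1` is the message bit.
-/

theorem Nat.testBit_add_one_ne_iff (n j : ℕ) :
    (n + 1).testBit j ≠ n.testBit j ↔ ∀ i < j, n.testBit i := by
  induction j generalizing n with
  | zero => simp [Nat.testBit_zero]; omega
  | succ j ih =>
    simp only [Nat.testBit_add_one, Nat.forall_lt_succ_left, Nat.testBit_zero]
    rcases Nat.even_or_odd' n with ⟨m, rfl | rfl⟩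
    · have h_succ : (2 * m + 1) / 2 = m := by omega
      have h_self : 2 * m / 2 = m := by omega
      simp [h_succ, h_self]
    · have h_succ : (2 * m + 1 + 1) / 2 = m + 1 := by omega
      have h_self : (2 * m + 1) / 2 = m := by omega
      simp [h_succ, h_self, ih]

theorem Nat.testBit_add_two_pow_ne_iff (n p j : ℕ) :
    (n + 2 ^ p).testBit (j + p) ≠ n.testBit (j + p) ↔ ∀ i < j, n.testBit (i + p) := by
  simp only [← Nat.testBit_div_two_pow, Nat.add_div_right n (Nat.two_pow_pos p)]
  exact Nat.testBit_add_one_ne_iff _ _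

theorem stuck_at_one_corrupts_message_bit_general (k : ℕ) (hk : 2 ≤ k)
    (x y : ℕ)
    (z : ℕ) (hz : z = (x + y) % 2 ^ (k + 1))
    (hmsg : Nat.testBit z (k - 1) = Nat.testBit z k)
    (zstar : ℕ) (hzstar : zstar = ((x + 2 ^ (k - 2)) + y) % 2 ^ (k + 1)) :
    Nat.testBit zstar k ≠ Nat.testBit z k ↔
      (Nat.testBit z (k - 2) = true ∧ Nat.testBit z k = true) := by
  obtain ⟨p, rfl⟩ : ∃ p, k = 2 + p := ⟨k - 2, by omega⟩
  have hzstar_eq : zstar = (z + 2 ^ p) % 2 ^ (2 + p + 1) := by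
    rw [hzstar, hz, Nat.mod_add_mod, add_right_comm, Nat.add_sub_cancel_left]
  have hmsg' : z.testBit (1 + p) = z.testBit (2 + p) := by
    rwa [show 2 + p - 1 = 1 + p by omega] at hmsg
  have hcarry := Nat.testBit_add_two_pow_ne_iff z p 2
  rw [Nat.forall_lt_succ_left, Nat.forall_lt_succ_left] at hcarry
  rw [hzstar_eq, Nat.testBit_mod_two_pow, decide_eq_true (Nat.lt_succ_self _), Bool.true_and,
    hcarry, Nat.add_sub_cancel_left, ← hmsg', zero_add]
  simp

/-- Lemma 3: under the redundant message-bit condition (bits `k-1` and `k` of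
`z` both equal the decoded message bit), an active stuck-at-1 fault at
position `k-2` of the share `x` corrupts the message bit iff bit `k-2` of `z`
is 1 and the message bit is 1. -/
theorem stuck_at_one_corrupts_message_bit (k : ℕ) (hk : 2 ≤ k)
    (x y : ℕ) (hx : x < 2 ^ (k + 1)) (hy : y < 2 ^ (k + 1))
    (z : ℕ) (hz : z = (x + y) % 2 ^ (k + 1))
    (hmsg : Nat.testBit z (k - 1) = Nat.testBit z k)
    (hactive : Nat.testBit x (k - 2) = false)
    (zstar : ℕ) (hzstar : zstar = ((x + 2 ^ (k - 2)) + y) % 2 ^ (k + 1)) :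
    Nat.testBit zstar k ≠ Nat.testBit z k ↔
      (Nat.testBit z (k - 2) = true ∧ Nat.testBit z k = true) :=
  stuck_at_one_corrupts_message_bit_general k hk x y z hz hmsg zstar hzstar
end

section
/- (Bit-flip faults carry no information.) Let k ≥ 2 and let z < 2^(k+1). For each share value x ∈ [0, 2^(k+1)), set y = (z + 2^(k+1) − x) mod 2^(k+1) (so that (x + y) mod 2^(k+1) = z) and z* = ((x XOR 2^(k−2)) + y) mod 2^(k+1). Then the cardinality of the set of x ∈ [0, 2^(k+1)) for which Nat.testBit z* (k−1) ≠ Nat.testBit z (k−1) equals 2^k, independently of the value of Nat.testBit z (k−2). -/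
/-! Because `x + y ≡ z (mod 2^(k+1))`, the faulty sum is `z + 2^(k-2)` when bit `k-2` of `x` is
clear and `z - 2^(k-2)` when it is set. Adding `2^(k-2)` changes bit `k-1` exactly when it carries
out of bit `k-2`, i.e. when bit `k-2` of `z` is set; subtracting changes it exactly when it borrows,
i.e. when that bit is clear. So the fault propagates iff bits `k-2` of `x` and `z` differ, which
happens for exactly half of the `2^(k+1)` shares `x`. -/

namespace Nat

theorem xor_two_pow_eq_add_of_testBit_eq_false {x p : ℕ} (h : x.testBit p = false) :
    x ^^^ 2 ^ p = x + 2 ^ p := by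
  have hsplit := div_add_mod (x ^^^ 2 ^ p) (2 ^ p)
  rw [xor_div_two_pow, xor_mod_two_pow, Nat.div_self (Nat.two_pow_pos p), mod_self, xor_zero,
    xor_one_of_even] at hsplit
  · linarith [div_add_mod x (2 ^ p)]
  · rw [testBit_eq_decide_div_mod_eq, decide_eq_false_iff_not] at h
    exact even_iff.mpr (by omega)

theorem xor_two_pow_add_two_pow_of_testBit_eq_true {x p : ℕ} (h : x.testBit p = true) :
    (x ^^^ 2 ^ p) + 2 ^ p = x := by
  rw [← xor_two_pow_eq_add_of_testBit_eq_false (by simp [h]), xor_cancel_right]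

theorem testBit_one_succ (m : ℕ) : (m + 1).testBit 1 = (m.testBit 1 ^^ m.testBit 0) := by
  simp only [testBit_eq_decide_div_mod_eq, pow_one, pow_zero, Nat.div_one]
  by_cases h0 : m % 2 = 1 <;> by_cases h1 : m / 2 % 2 = 1 <;> simp [h0, h1] <;> omega

theorem testBit_add_two_pow_succ (n p : ℕ) :
    (n + 2 ^ p).testBit (p + 1) = (n.testBit (p + 1) ^^ n.testBit p) := by
  have shift (m i : ℕ) : m.testBit (i + p) = (m / 2 ^ p).testBit i := (testBit_div_two_pow m i).symm
  rw [add_comm p 1, shift, shift, Nat.add_div_right _ (Nat.two_pow_pos p), testBit_one_succ,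
    ← shift, ← shift, zero_add]

theorem testBit_add_two_pow_self (n p : ℕ) : (n + 2 ^ p).testBit p = !n.testBit p := by
  rw [add_comm, testBit_two_pow_add_eq]

end Nat

open Finset

theorem add_share_mod {N x : ℕ} (z : ℕ) (hx : x ≤ N) : (x + (z + N - x) % N) % N = z % N := by
  rw [Nat.add_mod_mod, show x + (z + N - x) = z + N by omega, Nat.add_mod_right]

theorem testBit_bitFlip_ne_iff {K p x : ℕ} (z : ℕ) (hp : p + 1 < K) (hx : x ≤ 2 ^ K) :
    (((x ^^^ 2 ^ p) + (z + 2 ^ K - x) % 2 ^ K) % 2 ^ K).testBit (p + 1) ≠ z.testBit (p + 1) ↔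
      x.testBit p = !z.testBit p := by
  set y := (z + 2 ^ K - x) % 2 ^ K
  have low (m j : ℕ) (hj : j < K) : (m % 2 ^ K).testBit j = m.testBit j := by simp [hj]
  have hz (j : ℕ) (hj : j < K) : z.testBit j = (x + y).testBit j := by
    rw [← low z j hj, ← add_share_mod z hx, low _ j hj]
  rw [low _ _ hp]
  cases hxp : x.testBit p
  · rw [Nat.xor_two_pow_eq_add_of_testBit_eq_false hxp, add_right_comm,
      Nat.testBit_add_two_pow_succ, hz _ hp, hz p (by omega)]
    cases (x + y).testBit (p + 1) <;> cases (x + y).testBit p <;> decide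
  · rw [← Nat.xor_two_pow_add_two_pow_of_testBit_eq_true hxp, add_right_comm] at hz
    rw [hz _ hp, hz p (by omega), Nat.testBit_add_two_pow_succ, Nat.testBit_add_two_pow_self]
    cases ((x ^^^ 2 ^ p) + y).testBit (p + 1) <;> cases ((x ^^^ 2 ^ p) + y).testBit p <;> decide

theorem card_filter_testBit_eq {n p : ℕ} (hp : p ≤ n) (b : Bool) :
    ((range (2 ^ (n + 1))).filter (fun x => x.testBit p = b)).card = 2 ^ n := by
  have hflip (c : Bool) : Set.MapsTo (· ^^^ 2 ^ p) ((range (2 ^ (n + 1))).filter (·.testBit p = c))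
      ((range (2 ^ (n + 1))).filter (·.testBit p = !c)) := by
    intro x hx
    simp only [coe_filter, mem_range, Set.mem_ofPred_eq] at hx ⊢
    exact ⟨Nat.xor_lt_two_pow hx.1 (Nat.pow_lt_pow_right one_lt_two (by omega)), by simp [hx.2]⟩
  have hswap : ((range (2 ^ (n + 1))).filter (·.testBit p = b)).card =
      ((range (2 ^ (n + 1))).filter (·.testBit p = !b)).card :=
    card_nbij' _ _ (hflip b) (by simpa using hflip (!b)) (fun x _ => by simp) (fun x _ => by simp)
  have hsplit := card_filter_add_card_filter_not (s := range (2 ^ (n + 1))) (·.testBit p = b)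
  simp only [Bool.eq_not.symm, card_range] at hsplit
  omega

theorem bit_flip_fault_no_information_general (k : ℕ) (hk : 2 ≤ k)
    (z : ℕ) :
    ((Finset.range (2 ^ (k + 1))).filter (fun x =>
        Nat.testBit
          (((x ^^^ 2 ^ (k - 2)) + ((z + 2 ^ (k + 1) - x) % 2 ^ (k + 1)))
            % 2 ^ (k + 1)) (k - 1)
          ≠ Nat.testBit z (k - 1))).card = 2 ^ k := by
  obtain ⟨p, rfl⟩ : ∃ p, k = p + 2 := ⟨k - 2, by omega⟩
  rw [show p + 2 - 2 = p by omega, show p + 2 - 1 = p + 1 by omega,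
    filter_congr fun x hx => testBit_bitFlip_ne_iff z (by omega) (mem_range.mp hx).le]
  exact card_filter_testBit_eq (by omega) _

/-- Bit-flip faults carry no information: over all `2^(k+1)` share values `x`
of `z`, the number of shares for which a bit-flip fault at position `k-2`
propagates to bit `k-1` equals `2^k`, independently of bit `k-2` of `z`. -/
theorem bit_flip_fault_no_information (k : ℕ) (hk : 2 ≤ k)
    (z : ℕ) (hz : z < 2 ^ (k + 1)) :
    ((Finset.range (2 ^ (k + 1))).filter (fun x =>
        Nat.testBit
          (((x ^^^ 2 ^ (k - 2)) + ((z + 2 ^ (k + 1) - x) % 2 ^ (k + 1)))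
            % 2 ^ (k + 1)) (k - 1)
          ≠ Nat.testBit z (k - 1))).card = 2 ^ k :=
  bit_flip_fault_no_information_general k hk z
end

section
/- (Saber, stuck-at-0 fault at bit ε_p − 1 = 9, i.e. position 8.) Let x, y < 2^10 with z = (x + y) mod 2^10. Suppose Nat.testBit x 8 = true (the fault is active) and let z* = ((x − 2^8) + y) mod 2^10. Then the decoded message bit (the most significant bit) is corrupted, i.e. Nat.testBit z* 9 ≠ Nat.testBit z 9, if and only if z ∈ {0, …, 255} ∪ {512, …, 767} (equivalently, z mod 512 < 256). -/
/-!
Since bit 8 of `x` is set, `x - 2^8` is `x` with that bit cleared, so the faulted sum is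
`z* = (z - 2^8) mod 2^10`. The top bit of a residue mod `2^10` records which half of
`[0, 2^10)` it lies in, and subtracting `2^8 ≤ 2^9` changes the half exactly when it
borrows across a multiple of `2^9`, i.e. when `z mod 2^9 < 2^8`.
-/

namespace Nat

theorem testBit_eq_decide_two_pow_le {w m : ℕ} (hw : w < 2 ^ (m + 1)) :
    w.testBit m = decide (2 ^ m ≤ w) := by
  rw [Nat.pow_succ] at hw
  by_cases hlt : w < 2 ^ m
  · simp [testBit_lt_two_pow hlt, hlt]
  · obtain ⟨r, rfl⟩ : ∃ r, w = 2 ^ m + r := ⟨w - 2 ^ m, by omega⟩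
    simp [testBit_two_pow_add_eq, testBit_lt_two_pow (show r < 2 ^ m by omega)]

theorem sub_two_pow_add_mod {x y k n : ℕ} (hkx : 2 ^ k ≤ x) (hkn : k ≤ n) :
    (x - 2 ^ k + y) % 2 ^ n = ((x + y) % 2 ^ n + 2 ^ n - 2 ^ k) % 2 ^ n := by
  have hK : 2 ^ k ≤ 2 ^ n := Nat.pow_le_pow_right two_pos hkn
  refine Nat.ModEq.add_right_cancel' (2 ^ k) ?_
  calc x - 2 ^ k + y + 2 ^ k = x + y := by omega
    _ ≡ (x + y) % 2 ^ n + 2 ^ n [MOD 2 ^ n] := by simp [Nat.ModEq]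
    _ = (x + y) % 2 ^ n + 2 ^ n - 2 ^ k + 2 ^ k := by omega

theorem testBit_sub_two_pow_mod_ne_iff {z k m : ℕ} (hz : z < 2 ^ (m + 1)) (hkm : k ≤ m) :
    ((z + 2 ^ (m + 1) - 2 ^ k) % 2 ^ (m + 1)).testBit m ≠ z.testBit m ↔
      z % 2 ^ m < 2 ^ k := by
  have hK : 2 ^ k ≤ 2 ^ m := Nat.pow_le_pow_right two_pos hkm
  have hw := Nat.mod_lt (z + 2 ^ (m + 1) - 2 ^ k) (Nat.two_pow_pos (m + 1))
  rw [testBit_eq_decide_two_pow_le hz, testBit_eq_decide_two_pow_le hw, ne_eq,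
    decide_eq_decide, Nat.pow_succ']
  rw [Nat.pow_succ'] at hz
  generalize 2 ^ k = K at *
  generalize 2 ^ m = M at *
  by_cases hzK : z < K
  · rw [Nat.mod_eq_of_lt (by omega : z + 2 * M - K < 2 * M), Nat.mod_eq_of_lt (by omega : z < M)]
    omega
  · rw [show z + 2 * M - K = z - K + 2 * M by omega, Nat.add_mod_right,
      Nat.mod_eq_of_lt (by omega : z - K < 2 * M)]
    by_cases hzM : z < M
    · rw [Nat.mod_eq_of_lt hzM]
      omega
    · rw [Nat.mod_eq_sub_mod (by omega), Nat.mod_eq_of_lt (by omega : z - M < M)]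
      omega

end Nat

theorem saber_stuck_at_zero_general
    (x y : ℕ)
    (z : ℕ) (hz : z = (x + y) % 2 ^ 10)
    (hactive : Nat.testBit x 8 = true)
    (zstar : ℕ) (hzstar : zstar = ((x - 2 ^ 8) + y) % 2 ^ 10) :
    Nat.testBit zstar 9 ≠ Nat.testBit z 9 ↔ z % 512 < 256 := by
  rw [hzstar, Nat.sub_two_pow_add_mod (Nat.ge_two_pow_of_testBit hactive) (by norm_num), ← hz]
  exact Nat.testBit_sub_two_pow_mod_ne_iff (hz ▸ Nat.mod_lt _ (by norm_num)) (by norm_num)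

/-- Saber, stuck-at-0 fault at position 8: the decoded message bit (the MSB,
bit 9) is corrupted iff `z mod 512 < 256`. -/
theorem saber_stuck_at_zero
    (x y : ℕ) (hx : x < 2 ^ 10) (hy : y < 2 ^ 10)
    (z : ℕ) (hz : z = (x + y) % 2 ^ 10)
    (hactive : Nat.testBit x 8 = true)
    (zstar : ℕ) (hzstar : zstar = ((x - 2 ^ 8) + y) % 2 ^ 10) :
    Nat.testBit zstar 9 ≠ Nat.testBit z 9 ↔ z % 512 < 256 :=
  saber_stuck_at_zero_general x y z hz hactive zstar hzstar
end
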